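/- arXiv:1801.04563 — 2 statements merged into one kernel-verified Lean document; each statement's English description precedes it below -/
import Mathlib

section
/- For every integer r ≥ 2, the quantity (4r)!·r!·r! − 6·(3r)!·(2r)!·r! + 6·(2r)!·(2r)!·(2r)! is nonzero. -/
lemma aux_fact (r : ℕ) : ∀ k, k ≤ r →
    2 ^ k * (3 * r).factorial * (r + k).factorial ≤ (3 * r + k).factorial * r.factorial := by
  intro k
  induction k with
  | zero => intro _; simp [Nat.mul_comm]
  | succ k ih =>
    intro hk
    have hk' : k ≤ r := Nat.le_of_succ_le hk
    have h1 := ih hk'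
    have h2 : 2 * (r + k + 1) ≤ 3 * r + k + 1 := by omega
    calc 2 ^ (k+1) * (3*r).factorial * (r + (k+1)).factorial
        = (2 * (r + k + 1)) * (2 ^ k * (3*r).factorial * (r + k).factorial) := by
          rw [show r + (k+1) = (r+k)+1 from rfl, Nat.factorial_succ]
          ring
      _ ≤ (3 * r + k + 1) * ((3 * r + k).factorial * r.factorial) :=
          Nat.mul_le_mul h2 h1
      _ = (3 * r + (k+1)).factorial * r.factorial := by
          rw [show 3*r + (k+1) = (3*r+k)+1 from rfl, Nat.factorial_succ]
          ring

theorem stmt0 (r : ℕ) (hr : 2 ≤ r) :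
    ((4 * r).factorial * r.factorial * r.factorial : ℤ)
      - 6 * (3 * r).factorial * (2 * r).factorial * r.factorial
      + 6 * (2 * r).factorial * (2 * r).factorial * (2 * r).factorial ≠ 0 := by
  rcases eq_or_lt_of_le hr with h | h
  · subst h
    norm_num [Nat.factorial]
  · have hr3 : 3 ≤ r := h
    have key : 2 ^ r * (3 * r).factorial * (2 * r).factorial ≤ (4 * r).factorial * r.factorial := by
      have := aux_fact r r le_rfl
      have e1 : 3 * r + r = 4 * r := by ring
      have e2 : r + r = 2 * r := by ring
      rwa [e1, e2] at this
    have hpow : 8 ≤ 2 ^ r := by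
      calc (8 : ℕ) = 2 ^ 3 := rfl
        _ ≤ 2 ^ r := Nat.pow_le_pow_right (by norm_num) hr3
    have hpos : 0 < (3 * r).factorial * (2 * r).factorial :=
      Nat.mul_pos (Nat.factorial_pos _) (Nat.factorial_pos _)
    have h6 : 6 * ((3 * r).factorial * (2 * r).factorial) <
        (4 * r).factorial * r.factorial := by
      calc 6 * ((3 * r).factorial * (2 * r).factorial)
          < 8 * ((3 * r).factorial * (2 * r).factorial) := by
            exact (Nat.mul_lt_mul_right hpos).mpr (by norm_num)
        _ ≤ 2 ^ r * ((3 * r).factorial * (2 * r).factorial) :=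
            Nat.mul_le_mul_right _ hpow
        _ ≤ (4 * r).factorial * r.factorial := by
            rw [← Nat.mul_assoc]; exact key
    have hrf : 0 < r.factorial := Nat.factorial_pos _
    have h7 : 6 * (3 * r).factorial * (2 * r).factorial * r.factorial <
        (4 * r).factorial * r.factorial * r.factorial := by
      have := (Nat.mul_lt_mul_right hrf).mpr h6
      calc 6 * (3 * r).factorial * (2 * r).factorial * r.factorial
          = 6 * ((3 * r).factorial * (2 * r).factorial) * r.factorial := by ring
        _ < (4 * r).factorial * r.factorial * r.factorial := this
    have h7' : (6 * (3 * r).factorial * (2 * r).factorial * r.factorial : ℤ) <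
        ((4 * r).factorial * r.factorial * r.factorial : ℤ) := by exact_mod_cast h7
    have h8 : (0 : ℤ) < 6 * (2 * r).factorial * (2 * r).factorial * (2 * r).factorial := by
      positivity
    push_cast at h7' ⊢
    linarith
end

section
/- Let K be a field of characteristic zero and let Φ(t) ∈ K[t] be a polynomial with Φ(0) ≠ 0 (nonzero constant term). If P ∈ K[x,y] satisfies (∂x − Φ(∂y))∂y P = 0, then ∂y P = 0, i.e., P ∈ K[x]. -/
/-!
Put `Q = ∂y P`, so that `∂x Q = Φ(∂y) Q`. Both partial derivatives are locally nilpotent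
and commute. If `Q ≠ 0`, some `R = ∂yᵐ Q` is nonzero with `∂y R = 0`; it still satisfies
`∂x R = Φ(∂y) R = Φ(0) R`, so `∂xⁿ R = Φ(0)ⁿ R ≠ 0` for all `n`, contradicting the local
nilpotence of `∂x`.
-/

/-- The partial derivative ∂x as a linear endomorphism of K[x,y]. -/
noncomputable def Dx (K : Type*) [CommRing K] : Module.End K (MvPolynomial (Fin 2) K) :=
  (MvPolynomial.pderiv (0 : Fin 2)).toLinearMap

/-- The partial derivative ∂y as a linear endomorphism of K[x,y]. -/
noncomputable def Dy (K : Type*) [CommRing K] : Module.End K (MvPolynomial (Fin 2) K) :=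
  (MvPolynomial.pderiv (1 : Fin 2)).toLinearMap

/-- The operator Λ = (∂x − Φ(∂y))∂y on K[x,y]. -/
noncomputable def Lam (K : Type*) [CommRing K] (Φ : Polynomial K) :
    Module.End K (MvPolynomial (Fin 2) K) :=
  (Dx K - Polynomial.aeval (Dy K) Φ) * Dy K

namespace MvPolynomial
variable {R σ : Type*} [CommRing R]

theorem totalDegree_pderiv_add_one_le {i : σ} {p : MvPolynomial σ R} (h : pderiv i p ≠ 0) :
    (pderiv i p).totalDegree + 1 ≤ p.totalDegree := by
  obtain ⟨t, ht, hdeg⟩ := Finset.exists_mem_eq_sup _ (support_nonempty.mpr h)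
    fun s => s.sum fun _ e => e
  have hcoeff : coeff (t + Finsupp.single i 1) p ≠ 0 := by
    rw [mem_support_iff, coeff_pderiv] at ht
    exact left_ne_zero_of_mul ht
  calc (pderiv i p).totalDegree + 1 = (t + Finsupp.single i 1).degree := by
        rw [totalDegree, hdeg, map_add, Finsupp.degree_single]; rfl
    _ ≤ p.totalDegree := le_totalDegree (mem_support_iff.mpr hcoeff)

theorem pderiv_iterate_eq_zero {i : σ} {p : MvPolynomial σ R} {n : ℕ} (h : p.totalDegree < n) :
    (pderiv i)^[n] p = 0 := by
  induction n generalizing p with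
  | zero => exact absurd h (Nat.not_lt_zero _)
  | succ n ih =>
    rw [Function.iterate_succ_apply]
    by_cases hp : pderiv i p = 0
    · rw [hp, iterate_map_zero]
    · exact ih (by have := totalDegree_pderiv_add_one_le hp; omega)

theorem pderiv_pderiv_comm (i j : σ) (p : MvPolynomial σ R) :
    pderiv i (pderiv j p) = pderiv j (pderiv i p) := by
  classical
  have : ⁅pderiv i, pderiv j⁆ = (0 : Derivation R (MvPolynomial σ R) (MvPolynomial σ R)) :=
    derivation_ext fun k => by
      rw [Derivation.commutator_apply]
      simp [pderiv_X, Pi.single_apply, apply_ite (pderiv _)]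
  have hp := congr($this p)
  rwa [Derivation.commutator_apply, Derivation.zero_apply, sub_eq_zero] at hp

end MvPolynomial

namespace Module.End

open Polynomial

variable {R M : Type*} [CommRing R] [AddCommGroup M] [Module R M] {D E : End R M}

theorem exists_pow_apply_ne_zero_and_apply_eq_zero {v : M} {n : ℕ} (hv : v ≠ 0)
    (hn : (E ^ n) v = 0) : ∃ m, (E ^ m) v ≠ 0 ∧ E ((E ^ m) v) = 0 := by
  induction n generalizing v with
  | zero => exact absurd hn hv
  | succ n ih =>
    by_cases hEv : E v = 0
    · exact ⟨0, by simpa using hv, by simpa using hEv⟩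
    · obtain ⟨m, hm⟩ := ih hEv (by rwa [← mul_apply, ← pow_succ])
      exact ⟨m + 1, by rwa [pow_succ, mul_apply]⟩

theorem eq_zero_of_apply_eq_smul [IsDomain R] [IsTorsionFree R M] {μ : R} {v : M}
    (hD : ∀ w, ∃ n, (D ^ n) w = 0) (hv : D v = μ • v) (hμ : μ ≠ 0) : v = 0 := by
  by_contra hv0
  obtain ⟨n, hn⟩ := hD v
  rw [HasEigenvector.pow_apply ⟨mem_eigenspace_iff.mpr hv, hv0⟩ n, smul_eq_zero] at hn
  exact hn.elim (pow_ne_zero n hμ) hv0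

theorem ker_sub_aeval_eq_bot [IsDomain R] [IsTorsionFree R M] (hDE : Commute D E)
    (hD : ∀ w, ∃ n, (D ^ n) w = 0) (hE : ∀ w, ∃ n, (E ^ n) w = 0) {Φ : R[X]}
    (hΦ : Φ.coeff 0 ≠ 0) : LinearMap.ker (D - aeval E Φ) = ⊥ := by
  refine LinearMap.ker_eq_bot'.mpr fun v hv => ?_
  rw [LinearMap.sub_apply, sub_eq_zero] at hv
  by_contra hv0
  obtain ⟨n, hn⟩ := hE v
  obtain ⟨m, hw0, hEw⟩ := exists_pow_apply_ne_zero_and_apply_eq_zero hv0 hn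
  have hEm : Commute (E ^ m) (aeval E Φ) := by
    simpa using (Commute.all (X ^ m) Φ).map (aeval E)
  have hDw : D ((E ^ m) v) = Φ.coeff 0 • (E ^ m) v := calc
    D ((E ^ m) v) = (E ^ m) (D v) := LinearMap.congr_fun (hDE.pow_right m).eq v
    _ = aeval E Φ ((E ^ m) v) := by rw [hv]; exact LinearMap.congr_fun hEm.eq v
    _ = Φ.coeff 0 • (E ^ m) v := by
      rw [aeval_apply_of_mem_apply_eq_smul (hEw.trans (zero_smul R _).symm),
        coeff_zero_eq_eval_zero]
  exact hw0 (eq_zero_of_apply_eq_smul hD hDw hΦ)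

end Module.End

theorem stmt5_general (K : Type*) [Field K] (Φ : Polynomial K)
    (hΦ : Φ.coeff 0 ≠ 0) (P : MvPolynomial (Fin 2) K)
    (h : Lam K Φ P = 0) : Dy K P = 0 := by
  have pderiv_locally_nilpotent (i : Fin 2) (p : MvPolynomial (Fin 2) K) :
      ∃ n, ((MvPolynomial.pderiv i).toLinearMap ^ n) p = 0 :=
    ⟨_, by
      rw [Module.End.pow_apply]
      exact MvPolynomial.pderiv_iterate_eq_zero (Nat.lt_succ_self _)⟩
  have hcomm : Commute (Dx K) (Dy K) := LinearMap.ext (MvPolynomial.pderiv_pderiv_comm 0 1)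
  exact LinearMap.ker_eq_bot'.mp (Module.End.ker_sub_aeval_eq_bot hcomm
    (pderiv_locally_nilpotent 0) (pderiv_locally_nilpotent 1) hΦ) _ h

theorem stmt5 (K : Type*) [Field K] [CharZero K] (Φ : Polynomial K)
    (hΦ : Φ.coeff 0 ≠ 0) (P : MvPolynomial (Fin 2) K)
    (h : Lam K Φ P = 0) : Dy K P = 0 :=
  stmt5_general K Φ hΦ P h
end
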